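/- arXiv:2110.14002 — 9 statements merged into one kernel-verified Lean document; each statement's English description precedes it below -/
import Mathlib

section
/- Let C ≥ 1, let p : Fin C → ℝ be a probability vector (p_i ≥ 0 for all i and Σ_i p_i = 1), and let f : Fin C → ℝ. Then the expectation of the two-sample LOORF estimator over an i.i.d. pair equals the score-function gradient: Σ_{i,j : Fin C} p_i · p_j · ((1/2) · (f(i) − f(j))) • (e_i − e_j) = Σ_i p_i · f(i) • (e_i − p), where both sides are vectors in Fin C → ℝ. -/
open Finset

def oneHot {C : ℕ} (i : Fin C) : Fin C → ℝ :=
  fun k => if k = i then 1 else 0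

/-- the expectation of the two-sample LOORF estimator over an i.i.d. pair
equals the score-function gradient `Σ_i p_i · f(i) • (e_i − p)`. -/
theorem two_sample_loorf_unbiased {C : ℕ} (hC : 1 ≤ C) (p : Fin C → ℝ)
    (hp0 : ∀ i, 0 ≤ p i) (hp1 : ∑ i, p i = 1) (f : Fin C → ℝ) :
    ∑ i, ∑ j, (p i * p j * ((1 / 2) * (f i - f j))) • (oneHot i - oneHot j)
      = ∑ i, (p i * f i) • (oneHot i - p) := by
  funext k
  simp only [Finset.sum_apply, Pi.smul_apply, Pi.sub_apply, smul_eq_mul, oneHot]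
  simp only [mul_sub, mul_ite, mul_one, mul_zero, Finset.sum_sub_distrib,
    Finset.sum_ite_eq, Finset.sum_ite_eq', Finset.mem_univ, if_true]
  have e1 : ∀ x : Fin C,
      (∑ x1 : Fin C, if k = x then p x * p x1 * (1/2 * f x) - p x * p x1 * (1/2 * f x1) else 0)
      = if k = x then ∑ x1 : Fin C, (p x * p x1 * (1/2 * f x) - p x * p x1 * (1/2 * f x1))
        else 0 := by
    intro x; split <;> simp
  rw [Finset.sum_congr rfl (fun x _ => e1 x), Finset.sum_ite_eq]
  simp only [Finset.mem_univ, if_true]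
  have A : ∑ x1 : Fin C, (p k * p x1 * (1/2 * f k) - p k * p x1 * (1/2 * f x1))
      = (∑ x1, p x1) * (p k * (1/2 * f k)) - (∑ x1, p x1 * f x1) * (p k * (1/2)) := by
    rw [Finset.sum_mul, Finset.sum_mul, ← Finset.sum_sub_distrib]
    exact Finset.sum_congr rfl (fun x _ => by ring)
  have B : ∑ x : Fin C, p x * p k * (1/2 * f x) = (∑ x, p x * f x) * (p k * (1/2)) := by
    rw [Finset.sum_mul]; exact Finset.sum_congr rfl (fun x _ => by ring)
  have Cc : ∑ x : Fin C, p x * p k * (1/2 * f k) = (∑ x, p x) * (p k * (1/2 * f k)) := by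
    rw [Finset.sum_mul]; exact Finset.sum_congr rfl (fun x _ => by ring)
  have D : ∑ x : Fin C, p x * f x * p k = (∑ x, p x * f x) * p k := by
    rw [Finset.sum_mul]
  rw [A, B, Cc, D, hp1]
  ring
end

section
/- Let C ≥ 1 and N ≥ 2, let p : Fin C → ℝ be a probability vector, and let f : Fin C → ℝ. Then the N-sample LOORF estimator is unbiased: Σ over z : Fin N → Fin C of (Π_n p(z(n))) · [(1/(N−1)) · Σ_n (f(z(n)) − (1/N) · Σ_m f(z(m))) • (e_{z(n)} − p)] = Σ_i p_i · f(i) • (e_i − p), where both sides are vectors in Fin C → ℝ. -/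
open Finset

section ProductWeights

variable {ι κ R : Type*} [Fintype κ] [DecidableEq κ] [CommSemiring R]

theorem prod_mulSingle_apply (n₀ : κ) (g : ι → R) (z : κ → ι) :
    ∏ n, (Pi.mulSingle n₀ g : κ → ι → R) n (z n) = g (z n₀) := by
  rw [Fintype.prod_eq_single n₀ fun n hn => by simp [Pi.mulSingle_eq_of_ne hn]]
  simp

variable [Fintype ι]

theorem sum_prod_mul_prod_apply (p : ι → R) (w : κ → ι → R) :
    ∑ z : κ → ι, (∏ n, p (z n)) * ∏ n, w n (z n) = ∏ n, ∑ i, p i * w n i := by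
  simp_rw [← prod_mul_distrib]
  exact (Fintype.prod_sum fun n i => p i * w n i).symm

variable {p : ι → R}

theorem sum_prod_mul_apply (hp : ∑ i, p i = 1) (n₀ : κ) (g : ι → R) :
    ∑ z : κ → ι, (∏ n, p (z n)) * g (z n₀) = ∑ i, p i * g i := by
  simp_rw [← prod_mulSingle_apply n₀ g, sum_prod_mul_prod_apply]
  rw [Fintype.prod_eq_single n₀ fun n hn => by simp [Pi.mulSingle_eq_of_ne hn, hp]]
  simp

theorem sum_prod_mul_apply_mul_apply (hp : ∑ i, p i = 1) {n₀ m₀ : κ} (h : n₀ ≠ m₀)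
    (g g' : ι → R) :
    ∑ z : κ → ι, (∏ n, p (z n)) * (g (z n₀) * g' (z m₀))
      = (∑ i, p i * g i) * ∑ i, p i * g' i := by
  have hw (z : κ → ι) : g (z n₀) * g' (z m₀)
      = ∏ n, (Pi.mulSingle n₀ g * Pi.mulSingle m₀ g' : κ → ι → R) n (z n) := by
    simp only [Pi.mul_apply, prod_mul_distrib, prod_mulSingle_apply]
  simp_rw [hw, sum_prod_mul_prod_apply]
  rw [Fintype.prod_eq_mul n₀ m₀ h fun n hn => by
    simp [Pi.mulSingle_eq_of_ne hn.1, Pi.mulSingle_eq_of_ne hn.2, hp]]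
  simp [Pi.mulSingle_eq_of_ne h, Pi.mulSingle_eq_of_ne h.symm]

end ProductWeights

theorem sum_prod_mul_loo_eq {ι κ R : Type*} [Fintype ι] [Fintype κ] [DecidableEq κ] [Field R]
    {p : ι → R} (hp : ∑ i, p i = 1) (hκ : (Fintype.card κ : R) ≠ 0) (F E : ι → R)
    (hE : ∑ i, p i * E i = 0) :
    ∑ z : κ → ι, (∏ n, p (z n)) *
        ∑ n, (F (z n) - (1 / (Fintype.card κ : R)) * ∑ m, F (z m)) * E (z n)
      = ((Fintype.card κ : R) - 1) * ∑ i, p i * (F i * E i) := by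
  set S := ∑ i, p i * (F i * E i)
  have hdiag (n : κ) : ∑ z : κ → ι, (∏ n', p (z n')) * (F (z n) * E (z n)) = S :=
    sum_prod_mul_apply hp n fun i => F i * E i
  have hcross (m n : κ) : ∑ z : κ → ι, (∏ n', p (z n')) * (F (z m) * E (z n))
      = if m = n then S else 0 := by
    split_ifs with h
    · subst h; exact hdiag m
    · rw [sum_prod_mul_apply_mul_apply hp h, hE, mul_zero]
  calc _ = ∑ n, ∑ z : κ → ι, (∏ n', p (z n')) * (F (z n) * E (z n))
        - 1 / (Fintype.card κ : R) *
          ∑ n, ∑ m, ∑ z : κ → ι, (∏ n', p (z n')) * (F (z m) * E (z n)) := by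
        simp only [sub_mul, mul_sub, sum_sub_distrib, mul_sum, sum_mul]
        congr 1
        · exact sum_comm
        · rw [sum_comm]
          refine sum_congr rfl fun n _ => ?_
          rw [sum_comm]
          exact sum_congr rfl fun m _ => sum_congr rfl fun z _ => by ring
    _ = Fintype.card κ * S - 1 / (Fintype.card κ : R) * (Fintype.card κ * S) := by
        simp [hdiag, hcross]
    _ = _ := by field_simp

theorem sum_mul_oneHot_apply_sub {C : ℕ} {p : Fin C → ℝ} (hp : ∑ i, p i = 1) (k : Fin C) :
    ∑ i, p i * (oneHot i k - p k) = 0 := by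
  simp [oneHot, mul_sub, sum_sub_distrib, ← sum_mul, hp]

theorem loorf_unbiased_general {C N : ℕ} (hN : 2 ≤ N) (p : Fin C → ℝ)
    (hp1 : ∑ i, p i = 1) (f : Fin C → ℝ) :
    ∑ z : Fin N → Fin C, (∏ n, p (z n)) •
        ((1 / ((N : ℝ) - 1)) •
          ∑ n, (f (z n) - (1 / (N : ℝ)) * ∑ m, f (z m)) • (oneHot (z n) - p))
      = ∑ i, (p i * f i) • (oneHot i - p) := by
  have hN' : (2 : ℝ) ≤ N := by exact_mod_cast hN
  funext k
  have key := sum_prod_mul_loo_eq (κ := Fin N) hp1 (by simp; omega) f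
    (fun i => oneHot i k - p k) (sum_mul_oneHot_apply_sub hp1 k)
  rw [Fintype.card_fin] at key
  simp only [Finset.sum_apply, Pi.smul_apply, smul_eq_mul, Pi.sub_apply]
  calc _ = 1 / ((N : ℝ) - 1) * ∑ z : Fin N → Fin C, (∏ n, p (z n)) *
        ∑ n, (f (z n) - (1 / (N : ℝ)) * ∑ m, f (z m)) * (oneHot (z n) k - p k) := by
        rw [mul_sum]
        exact sum_congr rfl fun z _ => by ring
    _ = _ := by
        rw [key, ← mul_assoc, one_div_mul_cancel (by linarith)]
        simp only [one_mul, mul_assoc]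

/-- the `N`-sample LOORF estimator is unbiased: its expectation over `N`
i.i.d. `Cat(p)` samples equals the score-function gradient `Σ_i p_i · f(i) • (e_i − p)`. -/
theorem loorf_unbiased {C N : ℕ} (hC : 1 ≤ C) (hN : 2 ≤ N) (p : Fin C → ℝ)
    (hp0 : ∀ i, 0 ≤ p i) (hp1 : ∑ i, p i = 1) (f : Fin C → ℝ) :
    ∑ z : Fin N → Fin C, (∏ n, p (z n)) •
        ((1 / ((N : ℝ) - 1)) •
          ∑ n, (f (z n) - (1 / (N : ℝ)) * ∑ m, f (z m)) • (oneHot (z n) - p))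
      = ∑ i, (p i * f i) • (oneHot i - p) :=
  loorf_unbiased_general hN p hp1 f
end

section
/- (CARTS unbiasedness, Theorem 1) Let C ≥ 1, let p : Fin C → ℝ be a probability vector, let f : Fin C → ℝ, and let q : Fin C × Fin C → ℝ be a bivariate probability mass function (q(i,j) ≥ 0, Σ_{i,j} q(i,j) = 1) with both marginals equal to p (Σ_j q(i,j) = p_i and Σ_i q(i,j) = p_j for all i, j) and with q(i,j) > 0 for all i ≠ j satisfying p_i · p_j > 0. Then the CARTS estimator is unbiased: Σ_{i,j} q(i,j) · [(1/2) · (f(i) − f(j)) · (p_i · p_j / q(i,j))] • (e_i − e_j) = Σ_i p_i · f(i) • (e_i − p). -/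
open Finset

/-- CARTS unbiasedness, Theorem 1: the CARTS estimator is unbiased:
its expectation under the bivariate pmf `q` equals `Σ_i p_i · f(i) • (e_i − p)`. -/
theorem carts_unbiased {C : ℕ} (hC : 1 ≤ C) (p : Fin C → ℝ)
    (hp0 : ∀ i, 0 ≤ p i) (hp1 : ∑ i, p i = 1) (f : Fin C → ℝ)
    (q : Fin C × Fin C → ℝ) (hq0 : ∀ i j, 0 ≤ q (i, j))
    (hq1 : ∑ i, ∑ j, q (i, j) = 1)
    (hmarg1 : ∀ i, ∑ j, q (i, j) = p i)
    (hmarg2 : ∀ j, ∑ i, q (i, j) = p j)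
    (hpos : ∀ i j, i ≠ j → 0 < p i * p j → 0 < q (i, j)) :
    ∑ i, ∑ j, (q (i, j) * ((1 / 2) * (f i - f j) * (p i * p j / q (i, j))))
        • (oneHot i - oneHot j)
      = ∑ i, (p i * f i) • (oneHot i - p) := by
  have key : ∀ i j, q (i, j) * ((1 / 2) * (f i - f j) * (p i * p j / q (i, j)))
      = (1 / 2) * (f i - f j) * (p i * p j) := by
    intro i j
    by_cases hij : i = j
    · subst hij; ring_nf
    · by_cases hq : q (i, j) = 0
      · have hpp : p i * p j = 0 := by
          by_contra h
          have : 0 < p i * p j :=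
            lt_of_le_of_ne (mul_nonneg (hp0 i) (hp0 j)) (Ne.symm h)
          exact absurd (hpos i j hij this) (by simp [hq])
        simp [hq, hpp]
      · field_simp
  simp only [key]
  funext k
  simp only [Finset.sum_apply, Pi.smul_apply, Pi.sub_apply, oneHot, smul_eq_mul,
    mul_sub, Finset.sum_sub_distrib, mul_ite, mul_one, mul_zero,
    Finset.sum_ite_eq, Finset.sum_ite_eq', Finset.mem_univ, if_true]
  have hA : ∑ x : Fin C, ∑ x1 : Fin C,
      (if k = x then (1 / 2 * f x - 1 / 2 * f x1) * (p x * p x1) else 0)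
      = ∑ x1 : Fin C, (1 / 2 * f k - 1 / 2 * f x1) * (p k * p x1) := by
    have : ∀ x : Fin C, (∑ x1 : Fin C,
        if k = x then (1 / 2 * f x - 1 / 2 * f x1) * (p x * p x1) else 0)
        = if k = x then ∑ x1 : Fin C, (1 / 2 * f x - 1 / 2 * f x1) * (p x * p x1) else 0 := by
      intro x; split <;> simp
    rw [Finset.sum_congr rfl fun x _ => this x]
    simp [Finset.sum_ite_eq]
  rw [hA, ← Finset.sum_sub_distrib]
  have hterm : ∀ j : Fin C,
      (1 / 2 * f k - 1 / 2 * f j) * (p k * p j) - (1 / 2 * f j - 1 / 2 * f k) * (p j * p k)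
      = (p k * f k) * p j - p j * f j * p k := by intro j; ring
  rw [Finset.sum_congr rfl fun j _ => hterm j, Finset.sum_sub_distrib, ← Finset.mul_sum, hp1,
    mul_one]
end

section
/- (Theorem 2, variance reduction) Let C ≥ 1, let p : Fin C → ℝ be a probability vector, let f : Fin C → ℝ, and let q : Fin C × Fin C → ℝ be a bivariate probability mass function with both marginals equal to p and with q(i,j) ≥ p_i · p_j for all i ≠ j. Let G = Σ_i p_i · f(i) • (e_i − p), let X(i,j) = (1/2)(f(i) − f(j)) · (p_i p_j / q(i,j)) • (e_i − e_j) (the CARTS estimator), and let Y(i,j) = (1/2)(f(i) − f(j)) • (e_i − e_j) (the two-sample LOORF estimator), where ‖·‖ is the Euclidean norm on Fin C → ℝ. Then Σ_{i,j} q(i,j) · ‖X(i,j) − G‖² ≤ Σ_{i,j} p_i · p_j · ‖Y(i,j) − G‖²; and if moreover there exist i ≠ j with q(i,j) > p_i · p_j > 0 and f(i) ≠ f(j), then the inequality is strict, i.e., Var[CARTS] < Var[2-sample LOORF]. -/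
open Finset

/-- The Euclidean norm of a vector in `Fin C → ℝ`. -/
noncomputable def euclNorm {C : ℕ} (v : Fin C → ℝ) : ℝ :=
  ‖((WithLp.equiv 2 (Fin C → ℝ)).symm v : EuclideanSpace ℝ (Fin C))‖

lemma euclNorm_sq {C : ℕ} (v : Fin C → ℝ) : euclNorm v ^ 2 = ∑ k, v k ^ 2 := by
  rw [euclNorm, EuclideanSpace.norm_eq, Real.sq_sqrt (by positivity)]
  simp [Real.norm_eq_abs, sq_abs]

lemma sum_sub_sq {C : ℕ} (a b : Fin C → ℝ) :
    ∑ k, (a k - b k)^2 = (∑ k, (a k)^2) - 2*(∑ k, a k * b k) + ∑ k, (b k)^2 := by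
  rw [Finset.sum_congr rfl (fun k _ => show (a k - b k)^2 = (a k)^2 - 2*(a k * b k) + (b k)^2 by ring),
    Finset.sum_add_distrib, Finset.sum_sub_distrib, ← Finset.mul_sum]

/-- Theorem 2, variance reduction: if `q(i,j) ≥ p_i p_j` off the diagonal,
then `Var[CARTS] ≤ Var[2-sample LOORF]`, with strict inequality if moreover some
off-diagonal pair has `q(i,j) > p_i p_j > 0` and `f i ≠ f j`. -/
theorem carts_variance_reduction {C : ℕ} (hC : 1 ≤ C) (p : Fin C → ℝ)
    (hp0 : ∀ i, 0 ≤ p i) (hp1 : ∑ i, p i = 1) (f : Fin C → ℝ)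
    (q : Fin C × Fin C → ℝ) (hq0 : ∀ i j, 0 ≤ q (i, j))
    (hq1 : ∑ i, ∑ j, q (i, j) = 1)
    (hmarg1 : ∀ i, ∑ j, q (i, j) = p i)
    (hmarg2 : ∀ j, ∑ i, q (i, j) = p j)
    (hdom : ∀ i j, i ≠ j → p i * p j ≤ q (i, j))
    (G : Fin C → ℝ) (hG : G = ∑ i, (p i * f i) • (oneHot i - p))
    (X : Fin C → Fin C → Fin C → ℝ)
    (hX : ∀ i j, X i j
      = ((1 / 2) * (f i - f j) * (p i * p j / q (i, j))) • (oneHot i - oneHot j))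
    (Y : Fin C → Fin C → Fin C → ℝ)
    (hY : ∀ i j, Y i j = ((1 / 2) * (f i - f j)) • (oneHot i - oneHot j)) :
    (∑ i, ∑ j, q (i, j) * euclNorm (X i j - G) ^ 2
        ≤ ∑ i, ∑ j, p i * p j * euclNorm (Y i j - G) ^ 2)
    ∧ ((∃ i j, i ≠ j ∧ 0 < p i * p j ∧ p i * p j < q (i, j) ∧ f i ≠ f j) →
        ∑ i, ∑ j, q (i, j) * euclNorm (X i j - G) ^ 2
          < ∑ i, ∑ j, p i * p j * euclNorm (Y i j - G) ^ 2) := by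
  classical
  set F := ∑ i, p i * f i with hF
  have hpp : ∀ i j : Fin C, 0 ≤ p i * p j := fun i j => mul_nonneg (hp0 i) (hp0 j)
  -- coefficient identity
  have hcoeff : ∀ i j : Fin C,
      q (i, j) * ((1/2) * (f i - f j) * (p i * p j / q (i, j)))
        = p i * p j * ((1/2) * (f i - f j)) := by
    intro i j
    rcases eq_or_ne (q (i, j)) 0 with h0 | h0
    · rcases eq_or_ne i j with rfl | hij
      · simp [h0]
      · have hz : p i * p j = 0 := le_antisymm (h0 ▸ hdom i j hij) (hpp i j)
        simp [h0, hz]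
    · field_simp
  -- coordinates of G
  have hGk : ∀ k, G k = p k * f k - F * p k := by
    intro k
    rw [hG]
    simp only [Finset.sum_apply, Pi.smul_apply, Pi.sub_apply, smul_eq_mul, oneHot]
    rw [Finset.sum_congr rfl (fun i _ => show
        (p i * f i) * ((if k = i then (1:ℝ) else 0) - p k)
          = (if k = i then p i * f i else 0) - p i * f i * p k by split <;> ring),
      Finset.sum_sub_distrib, Finset.sum_ite_eq, ← Finset.sum_mul]
    simp [hF]
  -- unbiasedness in each coordinate
  have hUnb : ∀ k, (∑ i, ∑ j,
      (p i * p j * ((1/2) * (f i - f j))) * ((oneHot i - oneHot j) k)) = G k := by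
    intro k
    have h1 : ∀ i j : Fin C,
        (p i * p j * ((1/2) * (f i - f j))) * ((oneHot i - oneHot j) k)
          = (if k = i then p i * p j * ((1/2) * (f i - f j)) else 0)
            - (if k = j then p i * p j * ((1/2) * (f i - f j)) else 0) := by
      intro i j
      simp only [Pi.sub_apply, oneHot]
      split <;> split <;> ring
    simp_rw [h1, Finset.sum_sub_distrib, Finset.sum_ite_eq, Finset.mem_univ, if_true]
    have h2 : ∀ i : Fin C,
        (∑ j, if k = i then p i * p j * ((1/2) * (f i - f j)) else 0)
          = if k = i then ∑ j, p i * p j * ((1/2) * (f i - f j)) else 0 := by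
      intro i; split <;> simp
    simp_rw [h2]
    rw [Finset.sum_ite_eq, if_pos (Finset.mem_univ k), hGk k]
    have e1 : ∑ j, p k * p j * ((1/2) * (f k - f j))
        = (1/2) * (p k * f k - p k * F) := by
      rw [Finset.sum_congr rfl (fun j _ => show p k * p j * ((1/2) * (f k - f j))
          = (1/2) * (p k * f k) * p j - (1/2) * p k * (p j * f j) by ring),
        Finset.sum_sub_distrib, ← Finset.mul_sum, ← Finset.mul_sum, hp1, ← hF]
      ring
    have e2 : ∑ i, p i * p k * ((1/2) * (f i - f k))
        = (1/2) * (p k * F - p k * f k) := by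
      rw [Finset.sum_congr rfl (fun i _ => show p i * p k * ((1/2) * (f i - f k))
          = (1/2) * p k * (p i * f i) - (1/2) * (p k * f k) * p i by ring),
        Finset.sum_sub_distrib, ← Finset.mul_sum, ← Finset.mul_sum, hp1, ← hF]
      ring
    rw [e1, e2]; ring
  -- cross terms
  have hcrossgen : ∀ (Z : Fin C → Fin C → Fin C → ℝ),
      (∀ i j k, Z i j k = (p i * p j * ((1/2) * (f i - f j))) * ((oneHot i - oneHot j) k)) →
      (∑ i, ∑ j, ∑ k, Z i j k * G k) = ∑ k, (G k)^2 := by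
    intro Z hZ
    rw [Finset.sum_congr rfl (fun i _ => Finset.sum_comm), Finset.sum_comm]
    refine Finset.sum_congr rfl fun k _ => ?_
    simp_rw [hZ]
    rw [Finset.sum_congr rfl (fun i _ => (Finset.sum_mul _ _ _).symm), ← Finset.sum_mul,
      hUnb k]
    ring
  have hcrossX : (∑ i, ∑ j, q (i, j) * ∑ k, X i j k * G k) = ∑ k, (G k)^2 := by
    rw [← hcrossgen (fun i j k => q (i, j) * (X i j k)) ?_]
    · refine Finset.sum_congr rfl fun i _ => Finset.sum_congr rfl fun j _ => ?_
      rw [Finset.mul_sum]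
      exact Finset.sum_congr rfl fun k _ => by ring
    · intro i j k
      simp only [hX, Pi.smul_apply, smul_eq_mul]
      rw [← mul_assoc, hcoeff]
  have hcrossY : (∑ i, ∑ j, p i * p j * ∑ k, Y i j k * G k) = ∑ k, (G k)^2 := by
    rw [← hcrossgen (fun i j k => p i * p j * (Y i j k)) ?_]
    · refine Finset.sum_congr rfl fun i _ => Finset.sum_congr rfl fun j _ => ?_
      rw [Finset.mul_sum]
      exact Finset.sum_congr rfl fun k _ => by ring
    · intro i j k
      simp only [hY, Pi.smul_apply, smul_eq_mul]
      ring
  -- total masses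
  have hqsum : ∑ i, ∑ j, q (i, j) * (∑ k, (G k)^2) = ∑ k, (G k)^2 := by
    simp_rw [← Finset.sum_mul]
    rw [hq1, one_mul]
  have hppsum1 : ∑ i, ∑ j, (p i * p j : ℝ) = 1 := by
    rw [← Finset.sum_mul_sum, hp1, one_mul]
  have hppsum : ∑ i, ∑ j, p i * p j * (∑ k, (G k)^2) = ∑ k, (G k)^2 := by
    simp_rw [← Finset.sum_mul]
    rw [hppsum1, one_mul]
  -- expand the two variances
  have hSq : ∑ i, ∑ j, q (i, j) * euclNorm (X i j - G) ^ 2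
      = (∑ i, ∑ j, q (i, j) * ∑ k, (X i j k)^2) - ∑ k, (G k)^2 := by
    have h1 : ∀ i j : Fin C, q (i, j) * euclNorm (X i j - G) ^ 2
        = q (i, j) * (∑ k, (X i j k)^2) - 2*(q (i, j) * ∑ k, X i j k * G k)
          + q (i, j) * (∑ k, (G k)^2) := by
      intro i j
      rw [euclNorm_sq]
      simp only [Pi.sub_apply]
      rw [sum_sub_sq]
      ring
    simp_rw [h1, Finset.sum_add_distrib, Finset.sum_sub_distrib, ← Finset.mul_sum]
    rw [hcrossX, hqsum]
    ring
  have hSp : ∑ i, ∑ j, p i * p j * euclNorm (Y i j - G) ^ 2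
      = (∑ i, ∑ j, p i * p j * ∑ k, (Y i j k)^2) - ∑ k, (G k)^2 := by
    have h1 : ∀ i j : Fin C, p i * p j * euclNorm (Y i j - G) ^ 2
        = p i * p j * (∑ k, (Y i j k)^2) - 2*(p i * p j * ∑ k, Y i j k * G k)
          + p i * p j * (∑ k, (G k)^2) := by
      intro i j
      rw [euclNorm_sq]
      simp only [Pi.sub_apply]
      rw [sum_sub_sq]
      ring
    simp_rw [h1, Finset.sum_add_distrib, Finset.sum_sub_distrib, ← Finset.mul_sum]
    rw [hcrossY, hppsum]
    ring
  -- squared-norm factorizations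
  have hEx : ∀ i j : Fin C, ∑ k, (X i j k)^2
      = ((1/2) * (f i - f j) * (p i * p j / q (i, j)))^2
        * ∑ k, ((oneHot i - oneHot j) k)^2 := by
    intro i j
    rw [Finset.mul_sum]
    refine Finset.sum_congr rfl fun k _ => ?_
    rw [hX]; simp only [Pi.smul_apply, smul_eq_mul]; ring
  have hEy : ∀ i j : Fin C, ∑ k, (Y i j k)^2
      = ((1/2) * (f i - f j))^2 * ∑ k, ((oneHot i - oneHot j) k)^2 := by
    intro i j
    rw [Finset.mul_sum]
    refine Finset.sum_congr rfl fun k _ => ?_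
    rw [hY]; simp only [Pi.smul_apply, smul_eq_mul]; ring
  have hE0 : ∀ i j : Fin C, (0:ℝ) ≤ ∑ k, ((oneHot i - oneHot j) k)^2 :=
    fun i j => Finset.sum_nonneg fun k _ => sq_nonneg _
  -- termwise coefficient inequality
  have hcoefle : ∀ i j : Fin C,
      q (i, j) * ((1/2) * (f i - f j) * (p i * p j / q (i, j)))^2
        ≤ p i * p j * ((1/2) * (f i - f j))^2 := by
    intro i j
    rcases eq_or_ne (q (i, j)) 0 with h0 | h0
    · rw [h0, zero_mul]
      exact mul_nonneg (hpp i j) (sq_nonneg _)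
    · have hqpos : 0 < q (i, j) := (hq0 i j).lt_of_ne (Ne.symm h0)
      rcases eq_or_ne i j with rfl | hij
      · simp
      · have h1 : (p i * p j)^2 / q (i, j) ≤ p i * p j := by
          rw [div_le_iff₀ hqpos]
          nlinarith [hdom i j hij, hpp i j]
        calc q (i, j) * ((1/2) * (f i - f j) * (p i * p j / q (i, j)))^2
            = ((1/2) * (f i - f j))^2 * ((p i * p j)^2 / q (i, j)) := by
              field_simp
          _ ≤ ((1/2) * (f i - f j))^2 * (p i * p j) :=
              mul_le_mul_of_nonneg_left h1 (sq_nonneg _)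
          _ = p i * p j * ((1/2) * (f i - f j))^2 := mul_comm _ _
  have hterm : ∀ i j : Fin C,
      q (i, j) * (∑ k, (X i j k)^2) ≤ p i * p j * (∑ k, (Y i j k)^2) := by
    intro i j
    rw [hEx, hEy, ← mul_assoc, ← mul_assoc]
    exact mul_le_mul_of_nonneg_right (hcoefle i j) (hE0 i j)
  refine ⟨?_, ?_⟩
  · rw [hSq, hSp]
    exact sub_le_sub_right
      (Finset.sum_le_sum fun i _ => Finset.sum_le_sum fun j _ => hterm i j) _
  · rintro ⟨i0, j0, hij, hpp0, hlt, hf⟩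
    rw [hSq, hSp]
    apply sub_lt_sub_right
    apply Finset.sum_lt_sum (fun i _ => Finset.sum_le_sum fun j _ => hterm i j)
    refine ⟨i0, Finset.mem_univ _, ?_⟩
    apply Finset.sum_lt_sum (fun j _ => hterm i0 j)
    refine ⟨j0, Finset.mem_univ _, ?_⟩
    -- strict term
    have hqpos : 0 < q (i0, j0) := lt_trans hpp0 hlt
    have hEpos : (0:ℝ) < ∑ k, ((oneHot i0 - oneHot j0) k)^2 := by
      have h1 : ((oneHot i0 - oneHot j0) i0)^2 = 1 := by
        simp [oneHot, Pi.sub_apply, hij]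
      calc (0:ℝ) < 1 := one_pos
        _ = ((oneHot i0 - oneHot j0) i0)^2 := h1.symm
        _ ≤ ∑ k, ((oneHot i0 - oneHot j0) k)^2 :=
            Finset.single_le_sum (f := fun k => ((oneHot i0 - oneHot j0) k)^2)
              (fun k _ => sq_nonneg _) (Finset.mem_univ i0)
    have hcoeflt : q (i0, j0) * ((1/2) * (f i0 - f j0) * (p i0 * p j0 / q (i0, j0)))^2
        < p i0 * p j0 * ((1/2) * (f i0 - f j0))^2 := by
      have hs : (0:ℝ) < ((1/2) * (f i0 - f j0))^2 := by
        have : f i0 - f j0 ≠ 0 := sub_ne_zero_of_ne hf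
        positivity
      have h1 : (p i0 * p j0)^2 / q (i0, j0) < p i0 * p j0 := by
        rw [div_lt_iff₀ hqpos]
        nlinarith
      calc q (i0, j0) * ((1/2) * (f i0 - f j0) * (p i0 * p j0 / q (i0, j0)))^2
          = ((1/2) * (f i0 - f j0))^2 * ((p i0 * p j0)^2 / q (i0, j0)) := by
            field_simp
        _ < ((1/2) * (f i0 - f j0))^2 * (p i0 * p j0) :=
            (mul_lt_mul_iff_right₀ hs).mpr h1
        _ = p i0 * p j0 * ((1/2) * (f i0 - f j0))^2 := mul_comm _ _
    rw [hEx, hEy, ← mul_assoc, ← mul_assoc]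
    exact mul_lt_mul_of_pos_right hcoeflt hEpos
end

section
/- (CARMS unbiasedness, Theorem 3) Let C ≥ 1 and N ≥ 2, let p : Fin C → ℝ be a probability vector, let f : Fin C → ℝ, and let Q : (Fin N → Fin C) → ℝ be an N-variate probability mass function (Q ≥ 0, Σ_z Q(z) = 1) such that for all ordered pairs n ≠ m and all i, j : Fin C, the bivariate marginal Σ over {z : z(n) = i and z(m) = j} of Q(z) equals q(i,j), where q has both univariate marginals equal to p and q(i,j) > 0 for all i ≠ j with p_i · p_j > 0. Then the CARMS estimator is unbiased: Σ_z Q(z) • [(1/(N·(N−1))) · Σ over ordered pairs n ≠ m of (1/2) · (f(z(n)) − f(z(m))) · (p_{z(n)} · p_{z(m)} / q(z(n), z(m))) • (e_{z(n)} − e_{z(m)})] = Σ_i p_i · f(i) • (e_i − p). -/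
/-!
For a fixed ordered pair `n ≠ m` the pair `(z n, z m)` has law `q`, so the two-sample estimator
has expectation `∑ i j, q(i,j) R_ij (1/2)(f i - f j)(e_i - e_j)`. The importance ratio cancels
`q(i,j)` wherever `q(i,j) > 0`; where `q(i,j) = 0` either `i = j` or `p_i p_j = 0`, and the
term vanishes on both sides. The resulting sum `∑ i j, (1/2)(f i - f j) p_i p_j (e_i - e_j)` has an
antisymmetric coefficient, so it collapses to `∑ i, p_i (f i - ∑ j, p_j f j) e_i`, which is the
score-function gradient. Averaging `N (N - 1)` copies of the same expectation changes nothing.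
-/

open Finset

theorem sum_sum_smul_sub {ι R M : Type*} [Fintype ι] [Ring R] [AddCommGroup M] [Module R M]
    (c : ι → ι → R) (v : ι → M) :
    ∑ i, ∑ j, c i j • (v i - v j) = ∑ i, (∑ j, (c i j - c j i)) • v i := by
  simp only [smul_sub, sum_sub_distrib, sub_smul, sum_smul]
  rw [sum_comm (f := fun i j => c i j • v j)]

theorem sum_smul_oneHot {C : ℕ} (p : Fin C → ℝ) : ∑ i, p i • oneHot i = p := by
  funext k
  simp [oneHot, Finset.sum_apply]

theorem sum_sum_antithetic_eq_scoreGrad {C : ℕ} (p f : Fin C → ℝ) (hp1 : ∑ i, p i = 1) :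
    ∑ i, ∑ j, ((1 / 2) * (f i - f j) * (p i * p j)) • (oneHot i - oneHot j)
      = ∑ i, (p i * f i) • (oneHot i - p) := by
  have hrow : ∀ i, ∑ j, ((1 / 2) * (f i - f j) * (p i * p j)
      - (1 / 2) * (f j - f i) * (p j * p i)) = p i * f i - (∑ j, p j * f j) * p i := by
    intro i
    simp only [show ∀ j, (1 / 2) * (f i - f j) * (p i * p j) - (1 / 2) * (f j - f i) * (p j * p i)
        = p i * f i * p j - p j * f j * p i from fun j => by ring,
      sum_sub_distrib, ← mul_sum, ← sum_mul, hp1, mul_one]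
  rw [sum_sum_smul_sub]
  simp only [hrow, sub_smul, sum_sub_distrib, smul_sub, mul_smul, ← smul_sum, sum_smul_oneHot]
  simp only [sum_smul, mul_smul]

noncomputable def pairEstimator {C : ℕ} (p f : Fin C → ℝ) (q : Fin C × Fin C → ℝ)
    (i j : Fin C) : Fin C → ℝ :=
  ((1 / 2) * (f i - f j) * (p i * p j / q (i, j))) • (oneHot i - oneHot j)

theorem smul_pairEstimator {C : ℕ} {p : Fin C → ℝ} (hp0 : ∀ i, 0 ≤ p i) (f : Fin C → ℝ)
    {q : Fin C × Fin C → ℝ} (hpos : ∀ i j, i ≠ j → 0 < p i * p j → 0 < q (i, j)) (i j : Fin C) :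
    q (i, j) • pairEstimator p f q i j
      = ((1 / 2) * (f i - f j) * (p i * p j)) • (oneHot i - oneHot j) := by
  unfold pairEstimator
  obtain rfl | hij := eq_or_ne i j
  · simp
  by_cases hq : q (i, j) = 0
  · have hpp : p i * p j = 0 :=
      ((mul_nonneg (hp0 i) (hp0 j)).lt_or_eq.resolve_left
        fun h => (hpos i j hij h).ne' hq).symm
    simp [hq, hpp]
  · rw [smul_smul]
    congr 1
    field_simp

theorem sum_smul_comp_eq_sum_fiber {α ι M : Type*} [Fintype α] [Fintype ι] [DecidableEq ι]
    [AddCommMonoid M] [Module ℝ M] (Q : α → ℝ) (u v : α → ι) (g : ι → ι → M) :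
    ∑ a, Q a • g (u a) (v a)
      = ∑ i, ∑ j, (∑ a ∈ univ.filter (fun a => u a = i ∧ v a = j), Q a) • g i j := by
  rw [← Fintype.sum_prod_type', ← sum_fiberwise univ (fun a => (u a, v a))]
  refine sum_congr rfl fun ij _ => ?_
  rw [sum_smul]
  refine sum_congr (filter_congr fun a _ => Prod.ext_iff) fun a ha => ?_
  obtain ⟨hu, hv⟩ := (mem_filter.mp ha).2
  rw [hu, hv]

theorem smul_sum_offDiag_eq_of_forall_ne {N : ℕ} (hN : 2 ≤ N) {M : Type*} [AddCommGroup M]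
    [Module ℝ M] (F : Fin N → Fin N → M) (G : M) (hF : ∀ n m, n ≠ m → F n m = G) :
    (1 / ((N : ℝ) * ((N : ℝ) - 1))) • ∑ n, ∑ m ∈ univ.filter (fun m => m ≠ n), F n m = G := by
  have hcard : ∀ n : Fin N, #(univ.filter fun m => m ≠ n) = N - 1 := fun n => by
    rw [filter_ne' univ n, card_erase_of_mem (mem_univ n), card_univ, Fintype.card_fin]
  have hsum : ∑ n, ∑ m ∈ univ.filter (fun m => m ≠ n), F n m = ((N : ℝ) * ((N : ℝ) - 1)) • G := by
    rw [sum_congr rfl fun n _ => sum_congr rfl fun m (hm : m ∈ univ.filter (· ≠ n)) =>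
      hF n m (mem_filter.mp hm).2.symm]
    simp only [sum_const, hcard, card_univ, Fintype.card_fin, smul_smul,
      ← Nat.cast_smul_eq_nsmul ℝ, Nat.cast_sub (one_le_two.trans hN), Nat.cast_one]
  have hN' : (2 : ℝ) ≤ N := by exact_mod_cast hN
  rw [hsum, smul_smul, one_div, inv_mul_cancel₀ (by nlinarith), one_smul]

theorem carms_unbiased_general {C N : ℕ} (hN : 2 ≤ N) (p : Fin C → ℝ)
    (hp0 : ∀ i, 0 ≤ p i) (hp1 : ∑ i, p i = 1) (f : Fin C → ℝ)
    (Q : (Fin N → Fin C) → ℝ)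
    (q : Fin C × Fin C → ℝ)
    (hbiv : ∀ n m : Fin N, n ≠ m → ∀ i j : Fin C,
      ∑ z ∈ univ.filter (fun z : Fin N → Fin C => z n = i ∧ z m = j), Q z = q (i, j))
    (hpos : ∀ i j, i ≠ j → 0 < p i * p j → 0 < q (i, j)) :
    ∑ z : Fin N → Fin C, Q z •
        ((1 / ((N : ℝ) * ((N : ℝ) - 1))) •
          ∑ n, ∑ m ∈ univ.filter (fun m => m ≠ n),
            ((1 / 2) * (f (z n) - f (z m)) * (p (z n) * p (z m) / q (z n, z m)))
              • (oneHot (z n) - oneHot (z m)))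
      = ∑ i, (p i * f i) • (oneHot i - p) := by
  change ∑ z, Q z • ((1 / ((N : ℝ) * ((N : ℝ) - 1))) • ∑ n, ∑ m ∈ univ.filter (fun m => m ≠ n),
    pairEstimator p f q (z n) (z m)) = _
  have hpair : ∀ n m : Fin N, n ≠ m →
      ∑ z, Q z • pairEstimator p f q (z n) (z m) = ∑ i, (p i * f i) • (oneHot i - p) := by
    intro n m hnm
    simp only [sum_smul_comp_eq_sum_fiber, hbiv n m hnm, smul_pairEstimator hp0 f hpos]
    exact sum_sum_antithetic_eq_scoreGrad p f hp1
  rw [← smul_sum_offDiag_eq_of_forall_ne hN _ _ hpair]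
  simp only [smul_sum, smul_comm (Q _)]
  rw [sum_comm]
  exact sum_congr rfl fun n _ => sum_comm

/-- CARMS unbiasedness, Theorem 3: the CARMS estimator, averaging the
weighted two-sample estimator (with importance ratio `p_i p_j / q(i,j)`) over all ordered
pairs of the `N` jointly distributed samples, is unbiased for `Σ_i p_i · f(i) • (e_i − p)`. -/
theorem carms_unbiased {C N : ℕ} (hC : 1 ≤ C) (hN : 2 ≤ N) (p : Fin C → ℝ)
    (hp0 : ∀ i, 0 ≤ p i) (hp1 : ∑ i, p i = 1) (f : Fin C → ℝ)
    (Q : (Fin N → Fin C) → ℝ) (hQ0 : ∀ z, 0 ≤ Q z) (hQ1 : ∑ z, Q z = 1)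
    (q : Fin C × Fin C → ℝ)
    (hbiv : ∀ n m : Fin N, n ≠ m → ∀ i j : Fin C,
      ∑ z ∈ univ.filter (fun z : Fin N → Fin C => z n = i ∧ z m = j), Q z = q (i, j))
    (hmarg1 : ∀ i, ∑ j, q (i, j) = p i)
    (hmarg2 : ∀ j, ∑ i, q (i, j) = p j)
    (hpos : ∀ i j, i ≠ j → 0 < p i * p j → 0 < q (i, j)) :
    ∑ z : Fin N → Fin C, Q z •
        ((1 / ((N : ℝ) * ((N : ℝ) - 1))) •
          ∑ n, ∑ m ∈ univ.filter (fun m => m ≠ n),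
            ((1 / 2) * (f (z n) - f (z m)) * (p (z n) * p (z m) / q (z n, z m)))
              • (oneHot (z n) - oneHot (z m)))
      = ∑ i, (p i * f i) • (oneHot i - p) :=
  carms_unbiased_general hN p hp0 hp1 f Q q hbiv hpos
end

section
/- (Lemma 1, matrix form of CARMS) Let C ≥ 1 and N ≥ 2, let p : Fin C → ℝ be a probability vector, let f : Fin C → ℝ, let R : Fin C → Fin C → ℝ be symmetric (R(i,j) = R(j,i)), and let z : Fin N → Fin C. Define the N×N matrix O by O(n,m) = (1/(N−1)) · (if n = m then 0 else R(z(n), z(m))), and the diagonal matrix D by D(n,n) = Σ_m O(n,m) and D(n,m) = 0 for n ≠ m. Then (1/N) · Σ_{n,m : Fin N} f(z(n)) · (D(n,m) − O(n,m)) • (e_{z(m)} − p) = (1/(N·(N−1))) · Σ over ordered pairs n ≠ m of (1/2) · (f(z(n)) − f(z(m))) · R(z(n), z(m)) • (e_{z(n)} − e_{z(m)}), as an identity of vectors in Fin C → ℝ. -/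
/-!
`D - O` is the Laplacian of the weighted graph `O`, so its rows sum to zero: `p` drops out and
the matrix form becomes `Σₙ Σₘ f(z n) O(n,m) (e_{z n} - e_{z m})`. Averaging this double sum with
its transpose, using the symmetry of `O`, replaces `f(z n)` by `(f(z n) - f(z m)) / 2`; the diagonal
terms vanish, leaving the pairwise form.
-/

open Finset

section Laplacian

variable {ι K M : Type*} [Fintype ι] [AddCommGroup M]

lemma sum_laplacian_smul [DecidableEq ι] [Ring K] [Module K M] (W D : ι → ι → K)
    (hD : ∀ n m, D n m = if n = m then ∑ k, W n k else 0) (v : ι → M) (n : ι) :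
    ∑ m, (D n m - W n m) • v m = ∑ m, W n m • (v n - v m) := by
  simp only [sub_smul, smul_sub, sum_sub_distrib, hD, ite_smul, zero_smul, sum_ite_eq,
    mem_univ, if_true, sum_smul]

lemma sum_sum_smul_sub_eq_half_sub [Field K] [NeZero (2 : K)] [Module K M] (W : ι → ι → K)
    (hW : ∀ n m, W n m = W m n) (g : ι → K) (v : ι → M) :
    ∑ n, ∑ m, (g n * W n m) • (v n - v m)
      = ∑ n, ∑ m, ((1 / 2) * (g n - g m) * W n m) • (v n - v m) := by
  have hswap : ∑ n, ∑ m, (g m * W n m) • (v n - v m)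
      = -∑ n, ∑ m, (g n * W n m) • (v n - v m) := by
    rw [sum_comm]
    simp only [← sum_neg_distrib, ← smul_neg, neg_sub, hW]
  simp_rw [mul_assoc, mul_smul (1 / 2 : K), ← smul_sum, sub_mul, sub_smul, sum_sub_distrib, hswap,
    sub_neg_eq_add, ← two_smul K, smul_smul, one_div, inv_mul_cancel₀ (two_ne_zero' K), one_smul]

end Laplacian

theorem carms_matrix_form_general {C N : ℕ} (p : Fin C → ℝ) (f : Fin C → ℝ)
    (R : Fin C → Fin C → ℝ) (hR : ∀ i j, R i j = R j i)
    (z : Fin N → Fin C) (O D : Fin N → Fin N → ℝ)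
    (hO : ∀ n m, O n m = (1 / ((N : ℝ) - 1)) * (if n = m then 0 else R (z n) (z m)))
    (hD : ∀ n m, D n m = if n = m then ∑ k, O n k else 0) :
    (1 / (N : ℝ)) • ∑ n, ∑ m, (f (z n) * (D n m - O n m)) • (oneHot (z m) - p)
      = (1 / ((N : ℝ) * ((N : ℝ) - 1))) •
          ∑ n, ∑ m ∈ univ.filter (fun m => m ≠ n),
            ((1 / 2) * (f (z n) - f (z m)) * R (z n) (z m))
              • (oneHot (z n) - oneHot (z m)) := by
  have hO_symm : ∀ n m, O n m = O m n := fun n m => by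
    simp only [hO, eq_comm (a := n), hR (z n)]
  have hO_off : ∀ n m, m ≠ n → O n m = 1 / ((N : ℝ) - 1) * R (z n) (z m) := fun n m hmn => by
    rw [hO, if_neg hmn.symm]
  calc (1 / (N : ℝ)) • ∑ n, ∑ m, (f (z n) * (D n m - O n m)) • (oneHot (z m) - p)
      = (1 / (N : ℝ)) • ∑ n, ∑ m, (f (z n) * O n m) • (oneHot (z n) - oneHot (z m)) := by
        simp_rw [mul_smul, ← smul_sum, sum_laplacian_smul O D hD, sub_sub_sub_cancel_right]
    _ = (1 / (N : ℝ)) • ∑ n, ∑ m,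
          ((1 / 2) * (f (z n) - f (z m)) * O n m) • (oneHot (z n) - oneHot (z m)) := by
        rw [sum_sum_smul_sub_eq_half_sub O hO_symm]
    _ = _ := by
        rw [← one_div_mul_one_div, mul_smul]
        congr 1
        rw [smul_sum]
        refine sum_congr rfl fun n _ => ?_
        rw [smul_sum, sum_filter_of_ne fun m _ h => ?_]
        · refine sum_congr rfl fun m _ => ?_
          obtain rfl | hmn := eq_or_ne m n
          · simp
          · rw [hO_off n m hmn, smul_smul, mul_left_comm]
        · rintro rfl
          simp at h

/-- Lemma 1, matrix form of CARMS: the matrix form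
`(1/N)·f(Z)ᵀ(D − O)(Z − 1pᵀ)` equals the pairwise form of the CARMS estimator. -/
theorem carms_matrix_form {C N : ℕ} (hC : 1 ≤ C) (hN : 2 ≤ N) (p : Fin C → ℝ)
    (hp0 : ∀ i, 0 ≤ p i) (hp1 : ∑ i, p i = 1) (f : Fin C → ℝ)
    (R : Fin C → Fin C → ℝ) (hR : ∀ i j, R i j = R j i)
    (z : Fin N → Fin C) (O D : Fin N → Fin N → ℝ)
    (hO : ∀ n m, O n m = (1 / ((N : ℝ) - 1)) * (if n = m then 0 else R (z n) (z m)))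
    (hD : ∀ n m, D n m = if n = m then ∑ k, O n k else 0) :
    (1 / (N : ℝ)) • ∑ n, ∑ m, (f (z n) * (D n m - O n m)) • (oneHot (z m) - p)
      = (1 / ((N : ℝ) * ((N : ℝ) - 1))) •
          ∑ n, ∑ m ∈ univ.filter (fun m => m ≠ n),
            ((1 / 2) * (f (z n) - f (z m)) * R (z n) (z m))
              • (oneHot (z n) - oneHot (z m)) :=
  carms_matrix_form_general p f R hR z O D hO hD
end

section
/- (Multivariate CARMS unbiasedness) Let C ≥ 1, N ≥ 2, D ≥ 1, and fix d : Fin D. For each dimension e : Fin D, let p_e : Fin C → ℝ be a probability vector and Q_e : (Fin N → Fin C) → ℝ a probability mass function whose univariate marginals all equal p_e and whose bivariate marginals for every ordered pair n ≠ m all equal q_e : Fin C × Fin C → ℝ, with q_e(i,j) > 0 for all i ≠ j with p_e(i)·p_e(j) > 0. Let f : (Fin D → Fin C) → ℝ. Then Σ over Z : Fin D → Fin N → Fin C of (Π_e Q_e(Z(e))) • [(1/(N·(N−1))) · Σ over ordered pairs n ≠ m of (1/2) · (f(λ e, Z(e)(n)) − f(λ e, Z(e)(m))) · (p_d(Z(d)(n))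 · p_d(Z(d)(m)) / q_d(Z(d)(n), Z(d)(m))) • (e_{Z(d)(n)} − e_{Z(d)(m)})] = Σ over w : Fin D → Fin C of (Π_e p_e(w(e))) · f(w) • (e_{w(d)} − p_d), as vectors in Fin C → ℝ. -/
open Finset

/-- Marginalizing a product measure over all coordinates except the pair `(n, m)`. -/
private lemma marginal_pair {C N D : ℕ} (Q : Fin D → (Fin N → Fin C) → ℝ)
    (q : Fin D → Fin C × Fin C → ℝ) (n m : Fin N)
    (hbiv : ∀ e (i j : Fin C),
      ∑ z ∈ univ.filter (fun z : Fin N → Fin C => z n = i ∧ z m = j), Q e z = q e (i, j))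
    (g : (Fin D → Fin C) → (Fin D → Fin C) → ℝ) :
    ∑ Z : Fin D → Fin N → Fin C, (∏ e, Q e (Z e)) * g (fun e => Z e n) (fun e => Z e m)
      = ∑ v : Fin D → Fin C, ∑ u : Fin D → Fin C, (∏ e, q e (v e, u e)) * g v u := by
  have h1 : ∀ v u : Fin D → Fin C,
      (∏ e, q e (v e, u e))
        = ∑ Z ∈ univ.filter (fun Z : Fin D → Fin N → Fin C =>
            ((fun e => Z e n), (fun e => Z e m)) = (v, u)), ∏ e, Q e (Z e) := by
    intro v u
    have hset : (univ.filter (fun Z : Fin D → Fin N → Fin C =>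
            ((fun e => Z e n), (fun e => Z e m)) = (v, u)))
        = Fintype.piFinset (fun e =>
            univ.filter (fun z : Fin N → Fin C => z n = v e ∧ z m = u e)) := by
      ext Z
      simp only [mem_filter, mem_univ, true_and, Fintype.mem_piFinset, Prod.mk.injEq,
        funext_iff]
      constructor
      · rintro ⟨h1, h2⟩ e; exact ⟨h1 e, h2 e⟩
      · intro h; exact ⟨fun e => (h e).1, fun e => (h e).2⟩
    rw [hset, ← Finset.prod_univ_sum]
    exact Finset.prod_congr rfl fun e _ => (hbiv e (v e) (u e)).symm
  calc ∑ Z : Fin D → Fin N → Fin C, (∏ e, Q e (Z e)) * g (fun e => Z e n) (fun e => Z e m)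
      = ∑ y : (Fin D → Fin C) × (Fin D → Fin C),
          ∑ Z ∈ univ.filter (fun Z : Fin D → Fin N → Fin C =>
            ((fun e => Z e n), (fun e => Z e m)) = y),
            (∏ e, Q e (Z e)) * g (fun e => Z e n) (fun e => Z e m) :=
        (Finset.sum_fiberwise _ _ _).symm
    _ = ∑ y : (Fin D → Fin C) × (Fin D → Fin C),
          (∏ e, q e (y.1 e, y.2 e)) * g y.1 y.2 := by
        refine Finset.sum_congr rfl fun y _ => ?_
        obtain ⟨v, u⟩ := y
        rw [h1 v u, Finset.sum_mul]
        refine Finset.sum_congr rfl fun Z hZ => ?_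
        simp only [mem_filter, mem_univ, true_and, Prod.mk.injEq] at hZ
        rw [hZ.1, hZ.2]
    _ = _ := by rw [Fintype.sum_prod_type]

/-- Symmetrization of a double sum. -/
private lemma sum_sym_pair {α : Type*} [Fintype α] (G H : α → α → ℝ)
    (h : ∀ v u, G v u = (1 / 2) * (H v u + H u v)) :
    ∑ v, ∑ u, G v u = ∑ v, ∑ u, H v u := by
  have hc : ∑ v : α, ∑ u : α, (1 / 2 : ℝ) * H u v = ∑ v : α, ∑ u : α, (1 / 2 : ℝ) * H v u :=
    Finset.sum_comm
  calc ∑ v, ∑ u, G v u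
      = ∑ v, ∑ u, ((1 / 2) * H v u + (1 / 2) * H u v) := by
        refine Finset.sum_congr rfl fun v _ => Finset.sum_congr rfl fun u _ => ?_
        rw [h]; ring
    _ = (∑ v, ∑ u, (1 / 2 : ℝ) * H v u) + ∑ v, ∑ u, (1 / 2 : ℝ) * H u v := by
        simp [Finset.sum_add_distrib]
    _ = ∑ v, ∑ u, H v u := by
        rw [hc]
        simp_rw [← Finset.sum_add_distrib]
        refine Finset.sum_congr rfl fun v _ => Finset.sum_congr rfl fun u _ => by ring

/-- A sum over functions of a product factorizes. -/
private lemma sum_prod_fun {D C : ℕ} (h : Fin D → Fin C → ℝ) :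
    ∑ u : Fin D → Fin C, ∏ e, h e (u e) = ∏ e, ∑ j, h e j := by
  rw [Finset.prod_univ_sum (fun _ => univ) h, Fintype.piFinset_univ]

/-- multivariate CARMS unbiasedness: with `D` independent categorical
dimensions, each with `N` jointly distributed antithetic samples, the CARMS estimator for
dimension `d` is unbiased for the score-function gradient of `E[f]` w.r.t. that
dimension's logits. -/
theorem multivariate_carms_unbiased {C N D : ℕ} (hC : 1 ≤ C) (hN : 2 ≤ N) (hD : 1 ≤ D)
    (d : Fin D) (p : Fin D → Fin C → ℝ)
    (hp0 : ∀ e i, 0 ≤ p e i) (hp1 : ∀ e, ∑ i, p e i = 1)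
    (Q : Fin D → (Fin N → Fin C) → ℝ)
    (hQ0 : ∀ e z, 0 ≤ Q e z) (hQ1 : ∀ e, ∑ z, Q e z = 1)
    (q : Fin D → Fin C × Fin C → ℝ)
    (huni : ∀ e (n : Fin N) (i : Fin C),
      ∑ z ∈ univ.filter (fun z : Fin N → Fin C => z n = i), Q e z = p e i)
    (hbiv : ∀ e (n m : Fin N), n ≠ m → ∀ i j : Fin C,
      ∑ z ∈ univ.filter (fun z : Fin N → Fin C => z n = i ∧ z m = j), Q e z = q e (i, j))
    (hpos : ∀ e i j, i ≠ j → 0 < p e i * p e j → 0 < q e (i, j))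
    (f : (Fin D → Fin C) → ℝ) :
    ∑ Z : Fin D → Fin N → Fin C, (∏ e, Q e (Z e)) •
        ((1 / ((N : ℝ) * ((N : ℝ) - 1))) •
          ∑ n, ∑ m ∈ univ.filter (fun m => m ≠ n),
            ((1 / 2) * (f (fun e => Z e n) - f (fun e => Z e m)) *
              (p d (Z d n) * p d (Z d m) / q d (Z d n, Z d m)))
                • (oneHot (Z d n) - oneHot (Z d m)))
      = ∑ w : Fin D → Fin C, ((∏ e, p e (w e)) * f w) • (oneHot (w d) - p d) := by
  have hN1 : (1 : ℕ) ≤ N := le_trans one_le_two hN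
  have n0 : Fin N := ⟨0, by omega⟩
  have hn0 : (⟨0, by omega⟩ : Fin N) ≠ ⟨1, by omega⟩ := by simp [Fin.ext_iff]
  -- symmetry of q
  have hqsymm : ∀ e i j, q e (i, j) = q e (j, i) := by
    intro e i j
    rw [← hbiv e ⟨0, by omega⟩ ⟨1, by omega⟩ hn0 i j,
        ← hbiv e ⟨1, by omega⟩ ⟨0, by omega⟩ hn0.symm j i]
    exact Finset.sum_congr (by
      ext z
      rw [Finset.mem_filter, Finset.mem_filter, and_comm (a := z ⟨0, by omega⟩ = i)])
      fun _ _ => rfl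
  -- marginal of q
  have hqmarg : ∀ e i, ∑ j, q e (i, j) = p e i := by
    intro e i
    have h0 : ∀ j, q e (i, j) = ∑ z : Fin N → Fin C,
        if z ⟨0, by omega⟩ = i ∧ z ⟨1, by omega⟩ = j then Q e z else 0 := by
      intro j
      rw [← hbiv e ⟨0, by omega⟩ ⟨1, by omega⟩ hn0 i j, Finset.sum_filter]
    calc ∑ j, q e (i, j)
        = ∑ z : Fin N → Fin C, ∑ j,
            (if z ⟨0, by omega⟩ = i ∧ z ⟨1, by omega⟩ = j then Q e z else 0) := by
          simp_rw [h0]; exact Finset.sum_comm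
      _ = ∑ z : Fin N → Fin C, (if z ⟨0, by omega⟩ = i then Q e z else 0) := by
          refine Finset.sum_congr rfl fun z _ => ?_
          by_cases hz : z ⟨0, by omega⟩ = i
          · simp [hz]
          · simp [hz]
      _ = p e i := by rw [← Finset.sum_filter]; exact huni e ⟨0, by omega⟩ i
  funext k
  simp only [Finset.sum_apply, Pi.smul_apply, smul_eq_mul, Pi.sub_apply]
  -- per-pair expectation
  have hZsum : ∀ n m : Fin N, m ≠ n →
      (∑ Z : Fin D → Fin N → Fin C, (∏ e, Q e (Z e)) *
        (((1 / 2) * (f (fun e => Z e n) - f (fun e => Z e m)) *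
          (p d (Z d n) * p d (Z d m) / q d (Z d n, Z d m))) *
            (oneHot (Z d n) k - oneHot (Z d m) k)))
      = ∑ v : Fin D → Fin C, ∑ u : Fin D → Fin C, (∏ e, q e (v e, u e)) *
          (((1 / 2) * (f v - f u) * (p d (v d) * p d (u d) / q d (v d, u d))) *
            (oneHot (v d) k - oneHot (u d) k)) := by
    intro n m hm
    exact marginal_pair Q q n m (fun e i j => hbiv e n m (Ne.symm hm) i j)
      (fun v u => ((1 / 2) * (f v - f u) * (p d (v d) * p d (u d) / q d (v d, u d))) *
        (oneHot (v d) k - oneHot (u d) k))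
  -- cancellation of q against the importance weight
  have hcancel : ∀ i j : Fin C,
      q d (i, j) * ((p d i * p d j / q d (i, j)) * (oneHot i k - oneHot j k))
        = p d i * p d j * (oneHot i k - oneHot j k) := by
    intro i j
    by_cases hij : i = j
    · subst hij; simp
    by_cases hq : q d (i, j) = 0
    · have hpp : p d i * p d j = 0 := by
        by_contra h
        have h1 : 0 < p d i * p d j :=
          lt_of_le_of_ne (mul_nonneg (hp0 d i) (hp0 d j)) (Ne.symm h)
        exact absurd (hpos d i j hij h1) (by simp [hq])
      simp [hq, hpp]
    · field_simp
  -- one-hot sum identity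
  have hsum1 : ∀ i0 : Fin C, ∑ j, p d j * (oneHot i0 k - oneHot j k) = oneHot i0 k - p d k := by
    intro i0
    have h1 : ∑ j, p d j * oneHot j k = p d k := by
      simp [oneHot, mul_ite, Finset.sum_ite_eq]
    calc ∑ j, p d j * (oneHot i0 k - oneHot j k)
        = ∑ j, (p d j * oneHot i0 k - p d j * oneHot j k) :=
          Finset.sum_congr rfl fun j _ => by ring
      _ = (∑ j, p d j) * oneHot i0 k - ∑ j, p d j * oneHot j k := by
          rw [Finset.sum_sub_distrib, Finset.sum_mul]
      _ = oneHot i0 k - p d k := by rw [hp1 d, h1, one_mul]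
  -- the value of the per-pair expectation
  have hS : (∑ v : Fin D → Fin C, ∑ u : Fin D → Fin C, (∏ e, q e (v e, u e)) *
          (((1 / 2) * (f v - f u) * (p d (v d) * p d (u d) / q d (v d, u d))) *
            (oneHot (v d) k - oneHot (u d) k)))
      = ∑ w : Fin D → Fin C, ((∏ e, p e (w e)) * f w) * (oneHot (w d) k - p d k) := by
    have hsym : (∑ v : Fin D → Fin C, ∑ u : Fin D → Fin C, (∏ e, q e (v e, u e)) *
          (((1 / 2) * (f v - f u) * (p d (v d) * p d (u d) / q d (v d, u d))) *
            (oneHot (v d) k - oneHot (u d) k)))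
        = ∑ v : Fin D → Fin C, ∑ u : Fin D → Fin C, (∏ e, q e (v e, u e)) *
            (f v * ((p d (v d) * p d (u d) / q d (v d, u d)) *
              (oneHot (v d) k - oneHot (u d) k))) := by
      refine sum_sym_pair _ _ ?_
      intro v u
      have hP : (∏ e, q e (u e, v e)) = ∏ e, q e (v e, u e) :=
        Finset.prod_congr rfl fun e _ => (hqsymm e (u e) (v e))
      simp only [hP, hqsymm d (u d) (v d)]
      ring
    rw [hsym]
    calc ∑ v : Fin D → Fin C, ∑ u : Fin D → Fin C, (∏ e, q e (v e, u e)) *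
          (f v * ((p d (v d) * p d (u d) / q d (v d, u d)) * (oneHot (v d) k - oneHot (u d) k)))
        = ∑ v : Fin D → Fin C, ∑ u : Fin D → Fin C,
            f v * p d (v d) * ∏ e, (if e = d then p d (u e) * (oneHot (v d) k - oneHot (u e) k)
              else q e (v e, u e)) := by
          refine Finset.sum_congr rfl fun v _ => Finset.sum_congr rfl fun u _ => ?_
          rw [← Finset.mul_prod_erase univ (fun e => q e (v e, u e)) (Finset.mem_univ d),
              ← Finset.mul_prod_erase univ
                (fun e => if e = d then p d (u e) * (oneHot (v d) k - oneHot (u e) k)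
                  else q e (v e, u e)) (Finset.mem_univ d)]
          have herase : (∏ e ∈ univ.erase d,
              (if e = d then p d (u e) * (oneHot (v d) k - oneHot (u e) k)
                else q e (v e, u e))) = ∏ e ∈ univ.erase d, q e (v e, u e) := by
            refine Finset.prod_congr rfl fun e he => ?_
            rw [if_neg (Finset.mem_erase.1 he).1]
          rw [herase, if_pos rfl]
          calc q d (v d, u d) * (∏ e ∈ univ.erase d, q e (v e, u e)) *
              (f v * ((p d (v d) * p d (u d) / q d (v d, u d)) *
                (oneHot (v d) k - oneHot (u d) k)))
              = (∏ e ∈ univ.erase d, q e (v e, u e)) * f v *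
                (q d (v d, u d) * ((p d (v d) * p d (u d) / q d (v d, u d)) *
                  (oneHot (v d) k - oneHot (u d) k))) := by ring
            _ = (∏ e ∈ univ.erase d, q e (v e, u e)) * f v *
                (p d (v d) * p d (u d) * (oneHot (v d) k - oneHot (u d) k)) := by
                rw [hcancel]
            _ = f v * p d (v d) * (p d (u d) * (oneHot (v d) k - oneHot (u d) k) *
                  ∏ e ∈ univ.erase d, q e (v e, u e)) := by ring
      _ = ∑ v : Fin D → Fin C,
            f v * p d (v d) * ∏ e, ∑ j, (if e = d then p d j * (oneHot (v d) k - oneHot j k)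
              else q e (v e, j)) := by
          refine Finset.sum_congr rfl fun v _ => ?_
          rw [← Finset.mul_sum,
            sum_prod_fun (fun e j => if e = d then p d j * (oneHot (v d) k - oneHot j k)
              else q e (v e, j))]
      _ = ∑ v : Fin D → Fin C,
            f v * p d (v d) * ((oneHot (v d) k - p d k) * ∏ e ∈ univ.erase d, p e (v e)) := by
          refine Finset.sum_congr rfl fun v _ => ?_
          congr 1
          rw [← Finset.mul_prod_erase univ
            (fun e => ∑ j, (if e = d then p d j * (oneHot (v d) k - oneHot j k)
              else q e (v e, j))) (Finset.mem_univ d)]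
          have h2 : (∑ j, (if d = d then p d j * (oneHot (v d) k - oneHot j k)
              else q d (v d, j))) = oneHot (v d) k - p d k := by
            rw [← hsum1 (v d)]
            exact Finset.sum_congr rfl fun j _ => by rw [if_pos rfl]
          have h3 : (∏ e ∈ univ.erase d, ∑ j,
              (if e = d then p d j * (oneHot (v d) k - oneHot j k)
                else q e (v e, j))) = ∏ e ∈ univ.erase d, p e (v e) := by
            refine Finset.prod_congr rfl fun e he => ?_
            rw [← hqmarg e (v e)]
            exact Finset.sum_congr rfl fun j _ => by rw [if_neg (Finset.mem_erase.1 he).1]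
          rw [h2, h3]
      _ = ∑ w : Fin D → Fin C, ((∏ e, p e (w e)) * f w) * (oneHot (w d) k - p d k) := by
          refine Finset.sum_congr rfl fun w _ => ?_
          rw [← Finset.mul_prod_erase univ (fun e => p e (w e)) (Finset.mem_univ d)]
          ring
  calc ∑ Z : Fin D → Fin N → Fin C, (∏ e, Q e (Z e)) *
        ((1 / ((N : ℝ) * ((N : ℝ) - 1))) *
          ∑ n, ∑ m ∈ univ.filter (fun m => m ≠ n),
            ((1 / 2) * (f (fun e => Z e n) - f (fun e => Z e m)) *
              (p d (Z d n) * p d (Z d m) / q d (Z d n, Z d m))) *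
                (oneHot (Z d n) k - oneHot (Z d m) k))
      = (1 / ((N : ℝ) * ((N : ℝ) - 1))) * ∑ Z : Fin D → Fin N → Fin C, (∏ e, Q e (Z e)) *
          ∑ n, ∑ m ∈ univ.filter (fun m => m ≠ n),
            ((1 / 2) * (f (fun e => Z e n) - f (fun e => Z e m)) *
              (p d (Z d n) * p d (Z d m) / q d (Z d n, Z d m))) *
                (oneHot (Z d n) k - oneHot (Z d m) k) := by
        rw [Finset.mul_sum]
        exact Finset.sum_congr rfl fun Z _ => by ring
    _ = (1 / ((N : ℝ) * ((N : ℝ) - 1))) *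
          ∑ n, ∑ m ∈ univ.filter (fun m => m ≠ n),
            ∑ Z : Fin D → Fin N → Fin C, (∏ e, Q e (Z e)) *
              (((1 / 2) * (f (fun e => Z e n) - f (fun e => Z e m)) *
                (p d (Z d n) * p d (Z d m) / q d (Z d n, Z d m))) *
                  (oneHot (Z d n) k - oneHot (Z d m) k)) := by
        congr 1
        simp_rw [Finset.mul_sum]
        rw [Finset.sum_comm]
        exact Finset.sum_congr rfl fun n _ => Finset.sum_comm
    _ = (1 / ((N : ℝ) * ((N : ℝ) - 1))) *
          ∑ n : Fin N, ∑ m ∈ univ.filter (fun m => m ≠ n),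
            ∑ v : Fin D → Fin C, ∑ u : Fin D → Fin C, (∏ e, q e (v e, u e)) *
              (((1 / 2) * (f v - f u) * (p d (v d) * p d (u d) / q d (v d, u d))) *
                (oneHot (v d) k - oneHot (u d) k)) := by
        congr 1
        refine Finset.sum_congr rfl fun n _ => Finset.sum_congr rfl fun m hm => ?_
        exact hZsum n m (Finset.mem_filter.1 hm).2
    _ = ∑ w : Fin D → Fin C, ((∏ e, p e (w e)) * f w) * (oneHot (w d) k - p d k) := by
        rw [hS]
        have hcard : ∀ n : Fin N, (univ.filter (fun m => m ≠ n)).card = N - 1 := by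
          intro n
          rw [Finset.filter_ne' univ n, Finset.card_erase_of_mem (Finset.mem_univ n),
            Finset.card_univ, Fintype.card_fin]
        simp only [Finset.sum_const, hcard, nsmul_eq_mul, Finset.card_univ, Fintype.card_fin]
        have hNR : ((N : ℝ)) ≠ 0 := by positivity
        have hN1R : ((N : ℝ)) - 1 ≠ 0 := by
          have : (2 : ℝ) ≤ (N : ℝ) := by exact_mod_cast hN
          linarith
        have hcast : ((N - 1 : ℕ) : ℝ) = (N : ℝ) - 1 := by
          push_cast [Nat.cast_sub hN1]; ring
        rw [hcast, ← mul_assoc, ← mul_assoc]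
        rw [show 1 / ((N : ℝ) * ((N : ℝ) - 1)) * (N : ℝ) * ((N : ℝ) - 1) = 1 by
          field_simp]
        rw [one_mul]
end

section
/- Let n ≥ 1 be a natural number and let μ be a probability measure on ℝ × ℝ such that (i) μ(Iic a ×ˢ univ) = a for all a ∈ [0,1] (the first marginal is uniform on [0,1]), and (ii) μ(Iic a ×ˢ Iic b) = (max 0 (a^(1/n) + b^(1/n) − 1))^n for all a, b ∈ [0,1]. Then for every real ε with 0 < ε < 1, μ(Iic ε ×ˢ Ioi (1 − ε)) > 0. -/
open MeasureTheory Set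

/-- a probability measure on `ℝ × ℝ` whose first marginal is uniform on
`[0,1]` and whose bivariate CDF on `[0,1]²` is the Dirichlet-copula CDF
`(max 0 (a^(1/n) + b^(1/n) − 1))^n` assigns strictly positive measure to
`Iic ε ×ˢ Ioi (1 − ε)` for every `0 < ε < 1`. -/
theorem dirichlet_copula_pair_positive (n : ℕ) (hn : 1 ≤ n)
    (μ : Measure (ℝ × ℝ)) [IsProbabilityMeasure μ]
    (hmarg : ∀ a ∈ Icc (0 : ℝ) 1, (μ (Iic a ×ˢ (univ : Set ℝ))).toReal = a)
    (hcdf : ∀ a ∈ Icc (0 : ℝ) 1, ∀ b ∈ Icc (0 : ℝ) 1,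
      (μ (Iic a ×ˢ Iic b)).toReal
        = (max 0 (a ^ ((1 : ℝ) / n) + b ^ ((1 : ℝ) / n) - 1)) ^ n) :
    ∀ ε : ℝ, 0 < ε → ε < 1 → 0 < μ (Iic ε ×ˢ Ioi (1 - ε)) := by
  intro ε hε hε1
  have hne : n ≠ 0 := by omega
  have hεm : ε ∈ Icc (0 : ℝ) 1 := ⟨hε.le, hε1.le⟩
  have hbm : (1 - ε) ∈ Icc (0 : ℝ) 1 := ⟨by linarith, by linarith⟩
  -- key real inequality
  have key : (max 0 (ε ^ ((1 : ℝ) / n) + (1 - ε) ^ ((1 : ℝ) / n) - 1)) ^ n < ε := by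
    rcases le_or_gt (ε ^ ((1 : ℝ) / n) + (1 - ε) ^ ((1 : ℝ) / n) - 1) 0 with h | h
    · rw [max_eq_left h, zero_pow hne]; exact hε
    · rw [max_eq_right h.le]
      have hεpow : (ε ^ ((1 : ℝ) / n)) ^ n = ε := by
        rw [one_div]
        exact Real.rpow_inv_natCast_pow hε.le hne
      have hlt1 : (1 - ε) ^ ((1 : ℝ) / n) < 1 := by
        apply Real.rpow_lt_one (by linarith) (by linarith)
        positivity
      calc (ε ^ ((1 : ℝ) / n) + (1 - ε) ^ ((1 : ℝ) / n) - 1) ^ n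
          < (ε ^ ((1 : ℝ) / n)) ^ n := by
            apply pow_lt_pow_left₀ (by linarith) h.le hne
        _ = ε := hεpow
  -- split the measure
  have hsplit : (Iic ε ×ˢ (univ : Set ℝ))
      = (Iic ε ×ˢ Iic (1 - ε)) ∪ (Iic ε ×ˢ Ioi (1 - ε)) := by
    rw [← prod_union, Iic_union_Ioi]
  have hdisj : Disjoint (Iic ε ×ˢ Iic (1 - ε)) (Iic ε ×ˢ Ioi (1 - ε)) := by
    apply Set.disjoint_prod.2
    right
    exact Iic_disjoint_Ioi le_rfl
  have hmeas : MeasurableSet (Iic ε ×ˢ Ioi (1 - ε) : Set (ℝ × ℝ)) :=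
    measurableSet_Iic.prod measurableSet_Ioi
  have hadd : μ (Iic ε ×ˢ (univ : Set ℝ))
      = μ (Iic ε ×ˢ Iic (1 - ε)) + μ (Iic ε ×ˢ Ioi (1 - ε)) := by
    rw [hsplit, measure_union hdisj hmeas]
  have hfin : ∀ s : Set (ℝ × ℝ), μ s ≠ ⊤ := fun s => measure_ne_top μ s
  have htr : (μ (Iic ε ×ˢ (univ : Set ℝ))).toReal
      = (μ (Iic ε ×ˢ Iic (1 - ε))).toReal + (μ (Iic ε ×ˢ Ioi (1 - ε))).toReal := by
    rw [hadd, ENNReal.toReal_add (hfin _) (hfin _)]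
  rw [hmarg ε hεm, hcdf ε hεm (1 - ε) hbm] at htr
  have hpos : 0 < (μ (Iic ε ×ˢ Ioi (1 - ε))).toReal := by linarith
  rw [pos_iff_ne_zero]
  intro h0
  rw [h0] at hpos
  simp at hpos
end

section
/- Let C ≥ 1 and N ≥ 2, let p : Fin C → ℝ be a probability vector, let f : Fin C → ℝ, and let z : Fin N → Fin C. If the importance-ratio matrix is identically one, R(i,j) = 1 for all i, j, then the pairwise CARMS expression reduces to LOORF: (1/(N·(N−1))) · Σ over ordered pairs n ≠ m of (1/2) · (f(z(n)) − f(z(m))) · R(z(n), z(m)) • (e_{z(n)} − e_{z(m)}) = (1/(N−1)) · Σ_n (f(z(n)) − (1/N) · Σ_m f(z(m))) • (e_{z(n)} − p), as an identity of vectors in Fin C → ℝ. -/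
open Finset

/-- if the importance-ratio matrix is identically one, the pairwise CARMS
expression reduces to the `N`-sample LOORF estimator. -/
theorem carms_unit_ratio_eq_loorf {C N : ℕ} (hC : 1 ≤ C) (hN : 2 ≤ N) (p : Fin C → ℝ)
    (hp0 : ∀ i, 0 ≤ p i) (hp1 : ∑ i, p i = 1) (f : Fin C → ℝ)
    (z : Fin N → Fin C) (R : Fin C → Fin C → ℝ) (hR : ∀ i j, R i j = 1) :
    (1 / ((N : ℝ) * ((N : ℝ) - 1))) •
        ∑ n, ∑ m ∈ univ.filter (fun m => m ≠ n),
          ((1 / 2) * (f (z n) - f (z m)) * R (z n) (z m))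
            • (oneHot (z n) - oneHot (z m))
      = (1 / ((N : ℝ) - 1)) •
          ∑ n, (f (z n) - (1 / (N : ℝ)) * ∑ m, f (z m)) • (oneHot (z n) - p) := by
  have hN2 : (2:ℝ) ≤ (N:ℝ) := by exact_mod_cast hN
  have hN0 : (N:ℝ) ≠ 0 := by linarith
  have hN1 : (N:ℝ) - 1 ≠ 0 := by linarith
  funext k
  simp only [hR, mul_one, Pi.smul_apply, Finset.sum_apply, Pi.sub_apply, smul_eq_mul]
  set b : Fin N → ℝ := fun n => oneHot (z n) k with hb
  set T : ℝ := ∑ n, f (z n) * b n with hT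
  set S : ℝ := ∑ n, f (z n) with hS
  set B : ℝ := ∑ n, b n with hB
  have key : ∀ n : Fin N, (∑ m ∈ univ.filter (fun m => m ≠ n),
      (1/2 * (f (z n) - f (z m)) * (b n - b m)))
      = ∑ m, (1/2 * (f (z n) - f (z m)) * (b n - b m)) := by
    intro n
    rw [Finset.filter_ne', Finset.sum_erase]
    simp
  have inner : ∀ n : Fin N, (∑ m, (1/2 * (f (z n) - f (z m)) * (b n - b m)))
      = (N:ℝ) * (1/2 * (f (z n) * b n)) - (1/2 * f (z n)) * B
        - S * (1/2 * b n) + 1/2 * T := by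
    intro n
    have expand : ∀ m : Fin N, (1/2 * (f (z n) - f (z m)) * (b n - b m))
        = 1/2 * (f (z n) * b n) - (1/2 * f (z n)) * b m
          - f (z m) * (1/2 * b n) + 1/2 * (f (z m) * b m) := by intros; ring
    simp_rw [expand]
    rw [Finset.sum_add_distrib, Finset.sum_sub_distrib, Finset.sum_sub_distrib,
      Finset.sum_const, Finset.card_univ, Fintype.card_fin, nsmul_eq_mul,
      ← Finset.mul_sum, ← Finset.sum_mul, ← Finset.mul_sum, ← hB, ← hS, ← hT]
  have hL : (∑ n, ∑ m ∈ univ.filter (fun m => m ≠ n),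
      (1/2 * (f (z n) - f (z m)) * (b n - b m))) = (N:ℝ) * T - S * B := by
    simp_rw [key, inner]
    rw [Finset.sum_add_distrib, Finset.sum_sub_distrib, Finset.sum_sub_distrib,
      Finset.sum_const, Finset.card_univ, Fintype.card_fin, nsmul_eq_mul,
      ← Finset.mul_sum, ← Finset.sum_mul]
    have e1 : ∑ n : Fin N, (1/2 * (f (z n) * b n)) = 1/2 * T := by
      rw [hT, Finset.mul_sum]
    have e2 : ∑ n : Fin N, (1/2 * f (z n)) = 1/2 * S := by
      rw [hS, Finset.mul_sum]
    have e3 : ∑ n : Fin N, (1/2 * b n) = 1/2 * B := by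
      rw [hB, Finset.mul_sum]
    have e4 : ∑ x : Fin N, S * (1/2 * b x) = S * (1/2 * B) := by
      rw [← Finset.mul_sum, e3]
    rw [e1, e2, e4]
    ring
  have hRHS : (∑ n, (f (z n) - 1 / (N:ℝ) * S) * (b n - p k))
      = T - 1 / (N:ℝ) * S * B := by
    have expand : ∀ n : Fin N, (f (z n) - 1 / (N:ℝ) * S) * (b n - p k)
        = f (z n) * b n - (1 / (N:ℝ) * S) * b n - f (z n) * p k
          + (1 / (N:ℝ) * S * p k) := by intros; ring
    simp_rw [expand]
    rw [Finset.sum_add_distrib, Finset.sum_sub_distrib, Finset.sum_sub_distrib,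
      Finset.sum_const, Finset.card_univ, Fintype.card_fin, nsmul_eq_mul,
      ← Finset.mul_sum, ← Finset.sum_mul, ← hT, ← hS, ← hB]
    field_simp
    ring
  rw [hL, hRHS]
  field_simp
end
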